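/- arXiv:2512.17484 — 2 statements merged into one kernel-verified Lean document; each statement's English description precedes it below -/
import Mathlib

section
/- The canonical map SigmaIsolate : (Σ (a : Isolated A), Isolated (B a)) → Isolated (Σ (a : A), B a), sending a pair of isolated points to the isolated pair, is an embedding; its fiber over an isolated pair ((a,b), h) is equivalent to isIsolated(a) × isIsolated(b). -/
def IsIsolated {A : Type u} (a : A) : Type u := ∀ b : A, Decidable (a = b)

def Isolated (A : Type u) : Type u := Σ a : A, IsIsolated a

/-- A pair of isolated points is isolated in the `Σ`-type. -/
def pairIsolated {A : Type u} {B : A → Type v} {a₀ : A} {b₀ : B a₀}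
    (ha : IsIsolated a₀) (hb : IsIsolated b₀) :
    IsIsolated (⟨a₀, b₀⟩ : Σ a : A, B a) := by
  rintro ⟨a, b⟩
  rcases ha a with hp | p
  · exact isFalse fun h => hp (congrArg Sigma.fst h)
  · subst p
    rcases hb b with hq | q
    · exact isFalse fun h => hq (eq_of_heq (Sigma.mk.inj_iff.mp h).2)
    · subst q; exact isTrue rfl

/-- The canonical map sending a pair of isolated points to the isolated pair. -/
def SigmaIsolate {A : Type u} {B : A → Type v} :
    (Σ a : Isolated A, Isolated (B a.1)) → Isolated (Σ a : A, B a) :=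
  fun x => ⟨⟨x.1.1, x.2.1⟩, pairIsolated x.1.2 x.2.2⟩

/-! Being isolated is a proposition, since `Decidable p` is a subsingleton; so an isolated point
is determined by the underlying point, and `SigmaIsolate` is injective because `Sigma.mk` is.
A fiber of an injective map is a subsingleton, hence equivalent to any subsingleton it maps to
and from; an isolated pair lies in the image exactly when both components are isolated. -/

instance IsIsolated.instSubsingleton {A : Type u} (a : A) : Subsingleton (IsIsolated a) :=
  inferInstanceAs (Subsingleton (∀ b, Decidable (a = b)))

theorem Isolated.ext {A : Type u} {x y : Isolated A} (h : x.1 = y.1) : x = y :=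
  Sigma.ext h (Subsingleton.helim (congrArg IsIsolated h) _ _)

theorem sigmaIsolate_injective {A : Type u} {B : A → Type v} :
    Function.Injective (SigmaIsolate (A := A) (B := B)) := by
  rintro ⟨a, b⟩ ⟨a', b'⟩ h
  obtain ⟨ha, hb⟩ := Sigma.mk.inj_iff.mp (congrArg Sigma.fst h)
  obtain rfl : a = a' := Isolated.ext ha
  exact congrArg _ (Isolated.ext (eq_of_heq hb))

def sigmaIsolateFiberEquiv {A : Type u} {B : A → Type v} (y : Isolated (Σ a : A, B a)) :
    { x : Σ a : Isolated A, Isolated (B a.1) // SigmaIsolate x = y } ≃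
      (IsIsolated y.1.1 × IsIsolated y.1.2) :=
  have : Subsingleton { x // SigmaIsolate x = y } :=
    ⟨fun p q => Subtype.ext (sigmaIsolate_injective (p.2.trans q.2.symm))⟩
  equivOfSubsingletonOfSubsingleton
    (fun ⟨x, hx⟩ => hx ▸ (x.1.2, x.2.2))
    (fun ⟨ha, hb⟩ => ⟨⟨⟨y.1.1, ha⟩, ⟨y.1.2, hb⟩⟩, Isolated.ext rfl⟩)

/-- `SigmaIsolate` is an embedding; its fiber over an isolated pair is
equivalent to the product of the isolatedness predicates of the components. -/
theorem sigmaIsolate_embedding {A : Type u} {B : A → Type v} :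
    Function.Injective (SigmaIsolate (A := A) (B := B)) ∧
      ∀ y : Isolated (Σ a : A, B a),
        Nonempty ({ x : Σ a : Isolated A, Isolated (B a.1) // SigmaIsolate x = y } ≃
          (IsIsolated y.1.1 × IsIsolated y.1.2)) :=
  ⟨sigmaIsolate_injective, fun y => ⟨sigmaIsolateFiberEquiv y⟩⟩
end

section
/- For S : Type, P : S → Type, C : S → Type, and a function h : (Σ (s : S), (P s → A)) → A that is an embedding, the map WRec_h : W(S,P) → A defined by W-recursion WRec_h(sup(s,f)) = h(s, WRec_h ∘ f) is an embedding. -/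
/-- Non-dependent recursion on the W-type `W S P`. -/
def WRec {S : Type u} {P : S → Type u} {A : Type v}
    (h : (Σ s : S, (P s → A)) → A) : WType P → A
  | WType.mk s f => h ⟨s, fun p => WRec h (f p)⟩

theorem wRec_embedding_general {S : Type u} {P : S → Type u} {A : Type v}
    (h : (Σ s : S, (P s → A)) → A) (hemb : Function.Injective h) :
    Function.Injective (WRec h) := by
  intro x
  induction x with
  | mk s f ih =>
    rintro ⟨t, g⟩ hfg
    obtain ⟨rfl, hfg⟩ := Sigma.mk.inj_iff.mp (hemb hfg)
    congr 1
    funext p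
    exact ih p (congrFun (eq_of_heq hfg) p)

/-- W-recursion preserves embeddings: if `h` is an embedding then so is `WRec h`. -/
theorem wRec_embedding {S : Type u} {P : S → Type u} (C : S → Type u) {A : Type v}
    (h : (Σ s : S, (P s → A)) → A) (hemb : Function.Injective h) :
    Function.Injective (WRec h) :=
  wRec_embedding_general h hemb
end
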